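/- arXiv:math/0308051 — 4 statements merged into one kernel-verified Lean document; each statement's English description precedes it below -/
import Mathlib

section
/- Let g be a Lie algebra, X, Y ∈ g, and ℓ ≥ 0 such that (ad X)^{ℓ+1}(Y) = 0. Then for each n > ℓ there exists a linear map φ : g → g such that (ad X)^n ∘ (ad Y) = φ ∘ (ad X)^{n-ℓ}. -/
open LieAlgebra

/-- If `(ad X)^{ℓ+1} Y = 0`, then for each `n > ℓ` there is a linear map
`φ : g → g` with `(ad X)^n ∘ (ad Y) = φ ∘ (ad X)^{n-ℓ}`. -/
theorem stmt2 {K L : Type*} [CommRing K] [LieRing L] [LieAlgebra K L]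
    (X Y : L) (ℓ : ℕ) (hY : ((ad K L X) ^ (ℓ + 1)) Y = 0) :
    ∀ n : ℕ, ℓ < n → ∃ φ : Module.End K L,
      (ad K L X) ^ n * ad K L Y = φ * (ad K L X) ^ (n - ℓ) := by
  intro n hn
  have hzero : ∀ i, ℓ < i → ((ad K L X) ^ i) Y = 0 := by
    intro i hi
    have h : (ad K L X) ^ i = (ad K L X) ^ (i - (ℓ + 1)) * (ad K L X) ^ (ℓ + 1) := by
      rw [← pow_add]; congr 1; omega
    rw [h, Module.End.mul_apply, hY, map_zero]
  refine ⟨∑ k ∈ Finset.range (ℓ + 1),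
      n.choose k • (ad K L (((ad K L X) ^ k) Y) * (ad K L X) ^ (ℓ - k)), ?_⟩
  ext z
  simp only [Module.End.mul_apply, LieAlgebra.ad_apply]
  rw [LieAlgebra.ad_pow_lie, Finset.Nat.sum_antidiagonal_eq_sum_range_succ_mk]
  rw [LinearMap.sum_apply]
  rw [← Finset.sum_subset (Finset.range_subset_range.2 (by omega : ℓ + 1 ≤ n + 1))
    (fun i _ hi => by
      rw [hzero i (by simpa using hi), zero_lie, smul_zero])]
  refine Finset.sum_congr rfl fun k hk => ?_
  have hk' : k ≤ ℓ := by simpa [Nat.lt_succ_iff] using hk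
  have hp : ((ad K L X) ^ (ℓ - k)) (((ad K L X) ^ (n - ℓ)) z) = ((ad K L X) ^ (n - k)) z := by
    rw [← Module.End.mul_apply, ← pow_add]
    congr 2
    omega
  simp [Module.End.mul_apply, hp]
end

section
/- Let g = g_{-1} ⊕ g_0 ⊕ g_1 be a |1|-graded Lie algebra over a field of characteristic zero, X ∈ g_{-1} and Z ∈ g_1. If [X, [Z, X]] = 0, then [X, [X, [Z, [Z, X]]]] = 0, and consequently (ad X)^i(−[Z,X] − ½[Z,[Z,X]]) = 0 for all i ≥ 2. -/
open LieAlgebra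

/-- In a `|1|`-graded Lie algebra over a field of characteristic zero,
with `X ∈ g₋₁`, `Z ∈ g₁`: if `[X,[Z,X]] = 0` then `[X,[X,[Z,[Z,X]]]] = 0`, and
consequently `(ad X)^i (−[Z,X] − ½[Z,[Z,X]]) = 0` for all `i ≥ 2`. -/
theorem stmt3 {K L : Type*} [Field K] [CharZero K] [LieRing L] [LieAlgebra K L]
    (g : ℤ → Submodule K L)
    (hinternal : DirectSum.IsInternal g)
    (hbracket : ∀ (i j : ℤ) (x y : L), x ∈ g i → y ∈ g j → ⁅x, y⁆ ∈ g (i + j))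
    (hbound : ∀ m : ℤ, (1 : ℤ) < |m| → g m = ⊥)
    (X Z : L) (hX : X ∈ g (-1)) (hZ : Z ∈ g 1)
    (h : ⁅X, ⁅Z, X⁆⁆ = 0) :
    ⁅X, ⁅X, ⁅Z, ⁅Z, X⁆⁆⁆⁆ = 0 ∧
      ∀ i : ℕ, 2 ≤ i →
        ((ad K L X) ^ i) (-⁅Z, X⁆ - (1 / 2 : K) • ⁅Z, ⁅Z, X⁆⁆) = 0 := by
  have key : ⁅X, ⁅Z, ⁅Z, X⁆⁆⁆ = 0 := by
    rw [leibniz_lie, h, lie_zero, add_zero, ← lie_skew Z X, lie_neg, lie_self, neg_zero]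
  have hy : (ad K L X) (-⁅Z, X⁆ - (1 / 2 : K) • ⁅Z, ⁅Z, X⁆⁆) = 0 := by
    have h2 : ⁅X, ⁅X, Z⁆⁆ = 0 := by rw [← lie_skew X Z, lie_neg, h, neg_zero]
    simp [ad_apply, lie_sub, lie_neg, lie_smul, h, key, h2]
  refine ⟨by simp [key], ?_⟩
  intro i hi
  obtain ⟨j, rfl⟩ : ∃ j, i = j + 1 := ⟨i - 1, by omega⟩
  rw [pow_succ, Module.End.mul_apply, hy, map_zero]
end

section
/- In the conformal algebra setting with ⟨·,·⟩ nondegenerate of signature (p,q) on V = ℝ^{p+q} and [X,[X,Z]] = −2 Z(X)·X − ⟨X,X⟩·Z♯: for every X ≠ 0 there exists Z ∈ V* with [X,[X,Z]] = X. -/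
/-! If `⟨X,X⟩ ≠ 0`, the functional `Z = c ⟨X,·⟩` has `Z♯ = c X`, so the left-hand side is
`-3c ⟨X,X⟩ X` and `c = -1/(3⟨X,X⟩)` works. If `X` is null only the term `-2 Z(X) X` survives,
and any functional with `Z(X) = -1/2` works. -/

theorem LinearMap.BilinForm.apply_sharp_eq_self {R V : Type*} [CommRing R] [AddCommGroup V]
    [Module R V] {B : LinearMap.BilinForm R V} (hsep : B.SeparatingLeft)
    {sharp : Module.Dual R V →ₗ[R] V}
    (hsharp : ∀ (Z : Module.Dual R V) (w : V), B (sharp Z) w = Z w) (v : V) :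
    sharp (B v) = v :=
  sub_eq_zero.mp <| hsep _ fun w => by simp [hsharp]

theorem stmt6_general {V : Type*} [AddCommGroup V] [Module ℝ V]
    (B : LinearMap.BilinForm ℝ V) (hnd : B.Nondegenerate)
    (sharp : Module.Dual ℝ V →ₗ[ℝ] V)
    (hsharp : ∀ (Z : Module.Dual ℝ V) (w : V), B (sharp Z) w = Z w)
    (X : V) (hX : X ≠ 0) :
    ∃ Z : Module.Dual ℝ V, -((2 * Z X) • X) - (B X X) • sharp Z = X := by
  by_cases hnull : B X X = 0
  · obtain ⟨Z, hZ⟩ := Module.Projective.exists_dual_eq_one ℝ hX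
    refine ⟨(-1 / 2 : ℝ) • Z, ?_⟩
    norm_num [hZ, hnull]
  · refine ⟨(-1 / (3 * B X X)) • B X, ?_⟩
    rw [map_smul, B.apply_sharp_eq_self hnd.1 hsharp X, LinearMap.smul_apply, smul_eq_mul,
      smul_smul, ← neg_smul, ← sub_smul]
    convert one_smul ℝ X using 2
    field_simp
    ring

/-- In the conformal setting, for every `X ≠ 0` there is `Z ∈ V*` with
`−2 Z(X)•X − ⟨X,X⟩•Z♯ = X`. -/
theorem stmt6 {V : Type*} [AddCommGroup V] [Module ℝ V] [FiniteDimensional ℝ V]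
    (B : LinearMap.BilinForm ℝ V) (hsymm : B.IsSymm) (hnd : B.Nondegenerate)
    (sharp : Module.Dual ℝ V →ₗ[ℝ] V)
    (hsharp : ∀ (Z : Module.Dual ℝ V) (w : V), B (sharp Z) w = Z w)
    (X : V) (hX : X ≠ 0) :
    ∃ Z : Module.Dual ℝ V, -((2 * Z X) • X) - (B X X) • sharp Z = X :=
  stmt6_general B hnd sharp hsharp X hX
end

section
/- Let g be a |k|-graded Lie algebra over a field of characteristic zero, X ∈ g_{-k}, and Z₁ ∈ g₁, ..., Z_{k-1} ∈ g_{k-1}, Z_k ∈ g_k. Suppose W := Σ (1/(i₁!···i_k!)) (ad Z₁)^{i₁}···(ad Z_k)^{i_k}(X) − X (sum over all (i₁,...,i_k) ≠ 0) lies in p = g₀ ⊕ ... ⊕ g_k. Then [Z_ℓ, X] = 0 for all ℓ = 1, ..., k−1, and consequently W = [Z_k, X] + ½[Z_k, [Z_k, X]]. -/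
open LieAlgebra

/-!
The monomial `(ad Z₁)^{i₁} ⋯ (ad Z_k)^{i_k} X` is homogeneous of degree `-k + Σ ℓ iₗ`, so
`W ∈ 𝔭` says that the components of `W` of degree `-k + ℓ`, `0 < ℓ < k`, vanish. By induction
on `ℓ`, once `[Z_c, X] = 0` for `c < ℓ` the only monomial of degree `-k + ℓ` that survives is
`[Z_ℓ, X]`: any other one applies some `ad Z_c` with `c < ℓ` directly to `X`.

Once all `[Z_ℓ, X]` with `ℓ < k` vanish, each such `ad Z_ℓ` also kills `[Z_k, X]` (because
`[Z_ℓ, Z_k] ∈ g_{ℓ+k} = 0`) and `(ad Z_k)^j X` for `j ≥ 2` (again for degree reasons), while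
`(ad Z_k)^j X = 0` for `j ≥ 3`. Hence only `X`, `[Z_k, X]` and `½ [Z_k, [Z_k, X]]` remain.
-/

theorem Fintype.sum_comp_val_eq_finset_sum {ι M : Type*} [Fintype ι] [DecidableEq ι]
    [AddCommMonoid M] {N : ℕ} (F : (ι → ℕ) → M) (s : Finset (ι → ℕ))
    (hs : ∀ j ∈ s, ∀ ℓ, j ℓ < N) (hF : ∀ j ∉ s, F j = 0) :
    ∑ i : ι → Fin N, F (fun ℓ => i ℓ) = ∑ j ∈ s, F j := by
  let φ : (ι → Fin N) ↪ (ι → ℕ) :=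
    ⟨fun i ℓ => i ℓ, fun _ _ h => funext fun ℓ => Fin.ext (congrFun h ℓ)⟩
  change ∑ i, F (φ i) = _
  rw [← Finset.sum_map Finset.univ φ F]
  refine (Finset.sum_subset (fun j hj => ?_) (fun j _ hj => hF j hj)).symm
  exact Finset.mem_map.2 ⟨fun ℓ => ⟨j ℓ, hs j hj ℓ⟩, Finset.mem_univ _, rfl⟩

theorem List.prod_map_pow_apply_eq_zero {R M ι : Type*} [Semiring R] [AddCommMonoid M]
    [Module R M] (l : List ι) (f : ι → Module.End R M) (n : ι → ℕ) {x : M}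
    (hx : ∀ ℓ ∈ l, n ℓ ≠ 0 → f ℓ x = 0) (hn : ∃ ℓ ∈ l, n ℓ ≠ 0) :
    (l.map fun ℓ => f ℓ ^ n ℓ).prod x = 0 := by
  induction l with
  | nil => simp at hn
  | cons a t ih =>
    rw [List.map_cons, List.prod_cons, Module.End.mul_apply]
    by_cases ht : ∃ ℓ ∈ t, n ℓ ≠ 0
    · rw [ih (fun ℓ hℓ => hx ℓ (List.mem_cons_of_mem a hℓ)) ht, map_zero]
    · push Not at ht
      have ha : n a ≠ 0 := by
        obtain ⟨ℓ, hℓ, hnℓ⟩ := hn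
        rcases List.mem_cons.1 hℓ with rfl | hℓ
        · exact hnℓ
        · exact absurd (ht ℓ hℓ) hnℓ
      have hone : (t.map fun ℓ => f ℓ ^ n ℓ).prod = 1 := List.prod_eq_one fun _ h => by
        obtain ⟨ℓ, hℓ, rfl⟩ := List.mem_map.1 h
        rw [ht ℓ hℓ, pow_zero]
      rw [hone, Module.End.one_apply]
      exact Module.End.pow_map_zero_of_le (Nat.one_le_iff_ne_zero.2 ha)
        (by rw [pow_one, hx a List.mem_cons_self ha])

section Projection

variable {ι R M : Type*} [DecidableEq ι] [Semiring R] [AddCommMonoid M] [Module R M]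
  (ℳ : ι → Submodule R M) [DirectSum.Decomposition ℳ]

def gradedProj (i : ι) : M →ₗ[R] M :=
  (ℳ i).subtype ∘ₗ DirectSum.component R ι (fun i => ℳ i) i ∘ₗ
    (DirectSum.decomposeLinearEquiv ℳ).toLinearMap

variable {ℳ}

theorem gradedProj_of_mem_same {x : M} {i : ι} (hx : x ∈ ℳ i) : gradedProj ℳ i x = x :=
  DirectSum.decompose_of_mem_same ℳ hx

theorem gradedProj_of_mem_ne {x : M} {i j : ι} (hx : x ∈ ℳ i) (hij : i ≠ j) :
    gradedProj ℳ j x = 0 :=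
  DirectSum.decompose_of_mem_ne ℳ hx hij

theorem gradedProj_eq_zero_of_mem_iSup {s : Finset ι} {x : M} (hx : x ∈ ⨆ j ∈ s, ℳ j) {i : ι}
    (hi : i ∉ s) : gradedProj ℳ i x = 0 := by
  have hle : (⨆ j ∈ s, ℳ j) ≤ LinearMap.ker (gradedProj ℳ i) :=
    iSup₂_le fun j hj _ hy => gradedProj_of_mem_ne hy (by rintro rfl; exact hi hj)
  exact hle hx

end Projection

section Graded

variable {R L : Type*} [CommRing R] [LieRing L] [LieAlgebra R L] {g : ℤ → Submodule R L}

theorem ad_pow_apply_mem (hg : ∀ (i j : ℤ) (x y : L), x ∈ g i → y ∈ g j → ⁅x, y⁆ ∈ g (i + j))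
    {z x : L} {a m : ℤ} (hz : z ∈ g a) (hx : x ∈ g m) (n : ℕ) :
    (ad R L z ^ n) x ∈ g (m + n * a) := by
  induction n with
  | zero => simpa using hx
  | succ n ih =>
    rw [pow_succ', Module.End.mul_apply, ad_apply]
    convert hg _ _ _ _ hz ih using 2
    push_cast
    ring

theorem List.prod_map_ad_pow_apply_mem
    (hg : ∀ (i j : ℤ) (x y : L), x ∈ g i → y ∈ g j → ⁅x, y⁆ ∈ g (i + j)) {ι : Type*}
    (l : List ι) {Z : ι → L} {deg : ι → ℤ} (hZ : ∀ ℓ, Z ℓ ∈ g (deg ℓ)) (n : ι → ℕ) {x : L}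
    {m : ℤ} (hx : x ∈ g m) :
    (l.map fun ℓ => ad R L (Z ℓ) ^ n ℓ).prod x ∈ g (m + (l.map fun ℓ => n ℓ * deg ℓ).sum) := by
  induction l with
  | nil => simpa using hx
  | cons a t ih =>
    simp only [List.map_cons, List.prod_cons, List.sum_cons, Module.End.mul_apply]
    convert ad_pow_apply_mem hg (hZ a) ih (n a) using 2
    ring

theorem eq_zero_of_mem_of_lt {k : ℕ} (hbound : ∀ m : ℤ, (k : ℤ) < |m| → g m = ⊥) {x : L}
    {m : ℤ} (hx : x ∈ g m) (hm : (k : ℤ) < m) : x = 0 := by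
  rwa [hbound m (hm.trans_le (le_abs_self m)), Submodule.mem_bot] at hx

variable (R) in
def adMonomial {k : ℕ} (Z : Fin k → L) (i : Fin k → ℕ) : Module.End R L :=
  ((List.finRange k).map fun ℓ => ad R L (Z ℓ) ^ i ℓ).prod

def weightedDegree {k : ℕ} (i : Fin k → ℕ) : ℕ :=
  ∑ ℓ : Fin k, ((ℓ : ℕ) + 1) * i ℓ

theorem adMonomial_apply_mem
    (hg : ∀ (i j : ℤ) (x y : L), x ∈ g i → y ∈ g j → ⁅x, y⁆ ∈ g (i + j)) {k : ℕ}
    {Z : Fin k → L} (hZ : ∀ ℓ : Fin k, Z ℓ ∈ g ((ℓ : ℤ) + 1)) (i : Fin k → ℕ) {x : L} {m : ℤ}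
    (hx : x ∈ g m) : adMonomial R Z i x ∈ g (m + weightedDegree i) := by
  have hdeg : (weightedDegree i : ℤ) =
      ((List.finRange k).map fun ℓ => (i ℓ : ℤ) * ((ℓ : ℤ) + 1)).sum := by
    rw [weightedDegree, Nat.cast_sum, Fin.sum_univ_def]
    congr 1
    exact List.map_congr_left fun ℓ _ => by push_cast; ring
  rw [hdeg]
  exact List.prod_map_ad_pow_apply_mem hg _ hZ i hx

theorem adMonomial_single {k : ℕ} (Z : Fin k → L) (ℓ : Fin k) (t : ℕ) :
    adMonomial R Z (Pi.single ℓ t) = ad R L (Z ℓ) ^ t := by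
  rw [adMonomial, List.prod_map_eq_pow_single ℓ, List.count_finRange, pow_one, Pi.single_eq_same]
  intro c hc _
  rw [Pi.single_eq_of_ne hc, pow_zero]

theorem adMonomial_apply_eq_zero {k : ℕ} {Z : Fin k → L} {i : Fin k → ℕ} {x : L}
    (hx : ∀ ℓ, i ℓ ≠ 0 → ⁅Z ℓ, x⁆ = 0) (hi : i ≠ 0) : adMonomial R Z i x = 0 := by
  refine List.prod_map_pow_apply_eq_zero _ _ _ (fun ℓ _ hℓ => hx ℓ hℓ) ?_
  obtain ⟨ℓ, hℓ⟩ := Function.ne_iff.1 hi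
  exact ⟨ℓ, List.mem_finRange ℓ, hℓ⟩

theorem adMonomial_succ {n : ℕ} (Z : Fin (n + 1) → L) (i : Fin (n + 1) → ℕ) :
    adMonomial R Z i = adMonomial R (fun c => Z c.castSucc) (fun c => i c.castSucc) *
      ad R L (Z (Fin.last n)) ^ i (Fin.last n) := by
  simp only [adMonomial, ← List.ofFn_eq_map, List.ofFn_succ', List.concat_eq_append,
    List.prod_append, List.prod_singleton]

theorem eq_single_of_weightedDegree_eq {k : ℕ} {i : Fin k → ℕ} {ℓ : Fin k}
    (hi : weightedDegree i = ℓ + 1) (hℓ : i ℓ ≠ 0) : i = Pi.single ℓ 1 := by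
  have hsplit := Finset.add_sum_erase Finset.univ (fun c : Fin k => ((c : ℕ) + 1) * i c)
    (Finset.mem_univ ℓ)
  rw [← weightedDegree, hi] at hsplit
  have hle : ((ℓ : ℕ) + 1) * i ℓ ≤ ((ℓ : ℕ) + 1) * 1 := by
    rw [mul_one]; exact Nat.le.intro hsplit
  have h1 : i ℓ = 1 := by
    have := Nat.le_of_mul_le_mul_left hle (Nat.succ_pos ℓ)
    omega
  rw [h1, mul_one] at hsplit
  have hrest : ∑ c ∈ Finset.univ.erase ℓ, ((c : ℕ) + 1) * i c = 0 := by omega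
  funext c
  rcases eq_or_ne c ℓ with rfl | hc
  · simp [h1]
  · have := Finset.sum_eq_zero_iff.1 hrest c (Finset.mem_erase.2 ⟨hc, Finset.mem_univ c⟩)
    simpa [Pi.single_eq_of_ne hc] using this

theorem adMonomial_apply_eq_zero_of_weightedDegree_eq {k : ℕ} {Z : Fin k → L} {X : L}
    {ℓ : Fin k} (hX : ∀ c < ℓ, ⁅Z c, X⁆ = 0) {i : Fin k → ℕ} (hi : weightedDegree i = ℓ + 1)
    (hne : i ≠ Pi.single ℓ 1) : adMonomial R Z i X = 0 := by
  refine adMonomial_apply_eq_zero (fun c hc => hX c ?_) ?_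
  · have hle : ((c : ℕ) + 1) * i c ≤ (ℓ : ℕ) + 1 :=
      hi ▸ Finset.single_le_sum (f := fun c : Fin k => ((c : ℕ) + 1) * i c)
        (fun _ _ => Nat.zero_le _) (Finset.mem_univ c)
    have hcℓ : c ≠ ℓ := by
      rintro rfl
      exact hne (eq_single_of_weightedDegree_eq hi hc)
    have : (c : ℕ) ≤ ℓ := by nlinarith [Nat.pos_of_ne_zero hc]
    exact lt_of_le_of_ne (Fin.le_def.2 this) hcℓ
  · rintro rfl
    simp [weightedDegree] at hi

theorem ad_pow_apply_eq_zero_of_three_le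
    (hg : ∀ (i j : ℤ) (x y : L), x ∈ g i → y ∈ g j → ⁅x, y⁆ ∈ g (i + j)) {k : ℕ}
    (hbound : ∀ m : ℤ, (k : ℤ) < |m| → g m = ⊥) {z X : L} (hz : z ∈ g k) (hX : X ∈ g (-k))
    {j : ℕ} (hj : 3 ≤ j) (hk : 1 ≤ k) : (ad R L z ^ j) X = 0 :=
  eq_zero_of_mem_of_lt hbound (ad_pow_apply_mem hg hz hX j) (by nlinarith)

theorem lie_ad_pow_apply_eq_zero
    (hg : ∀ (i j : ℤ) (x y : L), x ∈ g i → y ∈ g j → ⁅x, y⁆ ∈ g (i + j)) {k : ℕ}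
    (hbound : ∀ m : ℤ, (k : ℤ) < |m| → g m = ⊥) {y z X : L} {a : ℤ} (ha : 0 < a)
    (hy : y ∈ g a) (hz : z ∈ g k) (hX : X ∈ g (-k)) (hyX : ⁅y, X⁆ = 0) :
    ∀ j : ℕ, ⁅y, (ad R L z ^ j) X⁆ = 0
  | 0 => by simpa using hyX
  | 1 => by
    have hyz : ⁅y, z⁆ = 0 := eq_zero_of_mem_of_lt hbound (hg _ _ _ _ hy hz) (by omega)
    rw [pow_one, ad_apply, leibniz_lie, hyz, hyX, zero_lie, lie_zero, add_zero]
  | j + 2 =>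
    eq_zero_of_mem_of_lt hbound (hg _ _ _ _ hy (ad_pow_apply_mem hg hz hX (j + 2)))
      (by push_cast; nlinarith)

end Graded

section AdExp

variable {K L : Type*} [Field K] [LieRing L] [LieAlgebra K L] {g : ℤ → Submodule K L}

variable (K) in
def adExpTerm {k : ℕ} (Z : Fin k → L) (X : L) (i : Fin k → ℕ) : L :=
  (∏ ℓ, ((i ℓ).factorial : K))⁻¹ • adMonomial K Z i X

variable (K) in
/-- `Ad(exp Z₀ ⋯ exp Z_{k-1}) X` with all exponents truncated below `N`; in a `|k|`-graded
algebra the terms with an exponent `> 2k` vanish, so for `N > 2k` this is the full series. -/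
def truncatedAdExp {k : ℕ} (Z : Fin k → L) (N : ℕ) (X : L) : L :=
  ∑ i : Fin k → Fin N, adExpTerm K Z X (fun ℓ => i ℓ)

theorem adExpTerm_single {k : ℕ} (Z : Fin k → L) (X : L) (ℓ : Fin k) (t : ℕ) :
    adExpTerm K Z X (Pi.single ℓ t) = (t.factorial : K)⁻¹ • (ad K L (Z ℓ) ^ t) X := by
  rw [adExpTerm, adMonomial_single, Fintype.prod_eq_single ℓ fun c hc => by
    rw [Pi.single_eq_of_ne hc, Nat.factorial_zero, Nat.cast_one], Pi.single_eq_same]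

theorem gradedProj_truncatedAdExp [DirectSum.Decomposition g]
    (hg : ∀ (i j : ℤ) (x y : L), x ∈ g i → y ∈ g j → ⁅x, y⁆ ∈ g (i + j)) {k : ℕ}
    {Z : Fin k → L} (hZ : ∀ ℓ : Fin k, Z ℓ ∈ g ((ℓ : ℤ) + 1)) {X : L} (hX : X ∈ g (-k))
    {N : ℕ} (hN : 1 < N) (ℓ : Fin k) (hkill : ∀ c < ℓ, ⁅Z c, X⁆ = 0) :
    gradedProj g (-k + (ℓ + 1)) (truncatedAdExp K Z N X) = ⁅Z ℓ, X⁆ := by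
  have hmem : ⁅Z ℓ, X⁆ ∈ g (-k + (ℓ + 1)) := by
    simpa only [add_comm] using hg _ _ _ _ (hZ ℓ) hX
  rw [truncatedAdExp, map_sum]
  refine (Fintype.sum_comp_val_eq_finset_sum (fun j => gradedProj g _ (adExpTerm K Z X j))
    {Pi.single ℓ 1} ?_ ?_).trans ?_
  · simp only [Finset.mem_singleton, forall_eq]
    intro c
    rw [Pi.single_apply]
    split_ifs <;> omega
  · intro j hj
    rw [Finset.mem_singleton] at hj
    rw [adExpTerm, map_smul]
    by_cases hdeg : weightedDegree j = ℓ + 1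
    · rw [adMonomial_apply_eq_zero_of_weightedDegree_eq hkill hdeg hj, map_zero, smul_zero]
    · rw [gradedProj_of_mem_ne (adMonomial_apply_mem hg hZ j hX) (by omega), smul_zero]
  · rw [Finset.sum_singleton, adExpTerm_single, Nat.factorial_one, Nat.cast_one, inv_one,
      one_smul, pow_one, ad_apply, gradedProj_of_mem_same hmem]

theorem lie_eq_zero_of_truncatedAdExp_sub_mem [DirectSum.Decomposition g]
    (hg : ∀ (i j : ℤ) (x y : L), x ∈ g i → y ∈ g j → ⁅x, y⁆ ∈ g (i + j)) {k : ℕ}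
    {Z : Fin k → L} (hZ : ∀ ℓ : Fin k, Z ℓ ∈ g ((ℓ : ℤ) + 1)) {X : L} (hX : X ∈ g (-k))
    {N : ℕ} (hN : 1 < N) (hW : truncatedAdExp K Z N X - X ∈ ⨆ j ∈ Finset.Icc (0 : ℤ) k, g j)
    (ℓ : Fin k) (hℓ : (ℓ : ℕ) + 1 < k) : ⁅Z ℓ, X⁆ = 0 := by
  induction ℓ using WellFoundedLT.induction with
  | _ ℓ ih =>
  rw [← gradedProj_truncatedAdExp hg hZ hX hN ℓ fun c hc => ih c hc (by omega),
    ← sub_add_cancel (truncatedAdExp K Z N X) X, map_add,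
    gradedProj_eq_zero_of_mem_iSup hW (by simp; omega), gradedProj_of_mem_ne hX (by omega),
    add_zero]

theorem adExpTerm_eq_zero_of_forall_ne_single
    (hg : ∀ (i j : ℤ) (x y : L), x ∈ g i → y ∈ g j → ⁅x, y⁆ ∈ g (i + j)) {n : ℕ}
    (hbound : ∀ m : ℤ, ((n + 1 : ℕ) : ℤ) < |m| → g m = ⊥) {Z : Fin (n + 1) → L}
    (hZ : ∀ ℓ : Fin (n + 1), Z ℓ ∈ g ((ℓ : ℤ) + 1)) {X : L} (hX : X ∈ g (-((n + 1 : ℕ) : ℤ)))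
    (hkill : ∀ c : Fin n, ⁅Z c.castSucc, X⁆ = 0) {i : Fin (n + 1) → ℕ}
    (hi : ∀ t < 3, i ≠ Pi.single (Fin.last n) t) : adExpTerm K Z X i = 0 := by
  have hZlast : Z (Fin.last n) ∈ g ((n + 1 : ℕ) : ℤ) := by simpa using hZ (Fin.last n)
  rw [adExpTerm, adMonomial_succ, Module.End.mul_apply]
  by_cases hinit : (fun c : Fin n => i c.castSucc) = 0
  · have hlast : 3 ≤ i (Fin.last n) := by
      by_contra h
      refine hi (i (Fin.last n)) (by omega) (funext (Fin.lastCases ?_ fun c => ?_))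
      · simp
      · simp [congrFun hinit c]
    rw [ad_pow_apply_eq_zero_of_three_le hg hbound hZlast hX hlast (by omega), map_zero,
      smul_zero]
  · rw [adMonomial_apply_eq_zero (fun c _ => lie_ad_pow_apply_eq_zero hg hbound (by positivity)
      (hZ c.castSucc) hZlast hX (hkill c) _) hinit, smul_zero]

theorem truncatedAdExp_eq_of_lie_eq_zero
    (hg : ∀ (i j : ℤ) (x y : L), x ∈ g i → y ∈ g j → ⁅x, y⁆ ∈ g (i + j)) {n : ℕ}
    (hbound : ∀ m : ℤ, ((n + 1 : ℕ) : ℤ) < |m| → g m = ⊥) {Z : Fin (n + 1) → L}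
    (hZ : ∀ ℓ : Fin (n + 1), Z ℓ ∈ g ((ℓ : ℤ) + 1)) {X : L} (hX : X ∈ g (-((n + 1 : ℕ) : ℤ)))
    (hkill : ∀ c : Fin n, ⁅Z c.castSucc, X⁆ = 0) {N : ℕ} (hN : 3 ≤ N) :
    truncatedAdExp K Z N X = X + ⁅Z (Fin.last n), X⁆ +
      (1 / 2 : K) • ⁅Z (Fin.last n), ⁅Z (Fin.last n), X⁆⁆ := by
  rw [truncatedAdExp, Fintype.sum_comp_val_eq_finset_sum (adExpTerm K Z X)
    ((Finset.range 3).image (Pi.single (Fin.last n))) ?_ ?_,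
    Finset.sum_image fun _ _ _ _ h => Pi.single_injective _ h]
  · simp [Finset.sum_range_succ, adExpTerm_single, Nat.factorial, pow_two]
  · simp only [Finset.mem_image, Finset.mem_range]
    rintro _ ⟨t, ht, rfl⟩ c
    rw [Pi.single_apply]
    split_ifs <;> omega
  · intro j hj
    refine adExpTerm_eq_zero_of_forall_ne_single hg hbound hZ hX hkill fun t ht hjt => hj ?_
    exact Finset.mem_image.2 ⟨t, Finset.mem_range.2 ht, hjt.symm⟩

end AdExp

/-- In a `|k|`-graded Lie algebra over a field of characteristic zero,
with `X ∈ g₋ₖ` and `Z_ℓ ∈ g_ℓ` (here `Zf ⟨ℓ-1,_⟩ = Z_ℓ`), set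
`W = Σ_{(i₁,…,i_k)} (1/(i₁!⋯i_k!)) (ad Z₁)^{i₁}⋯(ad Z_k)^{i_k}(X) − X`
(the sum is finite since terms with `Σ ℓ·i_ℓ > 2k` vanish by the grading, so we sum
over exponents `≤ 2k`). If `W ∈ 𝔭 = g₀ ⊕ ⋯ ⊕ gₖ`, then `[Z_ℓ, X] = 0` for
`ℓ = 1, …, k−1`, and consequently `W = [Z_k, X] + ½[Z_k,[Z_k,X]]`. -/
theorem stmt18 {K L : Type*} [Field K] [LieRing L] [LieAlgebra K L]
    (k : ℕ) (hk : 1 ≤ k) (g : ℤ → Submodule K L)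
    (hinternal : DirectSum.IsInternal g)
    (hbracket : ∀ (i j : ℤ) (x y : L), x ∈ g i → y ∈ g j → ⁅x, y⁆ ∈ g (i + j))
    (hbound : ∀ m : ℤ, (k : ℤ) < |m| → g m = ⊥)
    (X : L) (hX : X ∈ g (-(k : ℤ)))
    (Zf : Fin k → L) (hZ : ∀ ℓ : Fin k, Zf ℓ ∈ g ((ℓ : ℤ) + 1))
    (W : L)
    (hW : W = (∑ i : Fin k → Fin (2 * k + 1),
        (∏ ℓ, ((Nat.factorial (i ℓ) : K)))⁻¹ •
          (((List.finRange k).map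
              (fun ℓ => (ad K L (Zf ℓ)) ^ ((i ℓ : ℕ)))).prod X)) - X)
    (hWp : W ∈ ⨆ j ∈ Finset.Icc (0 : ℤ) (k : ℤ), g j) :
    (∀ ℓ : Fin k, (ℓ : ℕ) + 1 ≤ k - 1 → ⁅Zf ℓ, X⁆ = 0) ∧
      W = ⁅Zf ⟨k - 1, by omega⟩, X⁆ +
        (1 / 2 : K) • ⁅Zf ⟨k - 1, by omega⟩, ⁅Zf ⟨k - 1, by omega⟩, X⁆⁆ := by
  obtain ⟨n, rfl⟩ : ∃ n, k = n + 1 := ⟨k - 1, by omega⟩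
  let _ : DirectSum.Decomposition g := hinternal.chooseDecomposition
  change W = truncatedAdExp K Zf (2 * (n + 1) + 1) X - X at hW
  have hkill := lie_eq_zero_of_truncatedAdExp_sub_mem hbracket hZ hX (by omega) (hW ▸ hWp)
  refine ⟨fun ℓ hℓ => hkill ℓ (by omega), ?_⟩
  have hlast : (⟨n + 1 - 1, by omega⟩ : Fin (n + 1)) = Fin.last n := Fin.ext (by simp)
  rw [hlast, hW, truncatedAdExp_eq_of_lie_eq_zero hbracket hbound hZ hX
    (fun c => hkill c.castSucc (by simp)) (by omega)]
  abel
end
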